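/- Let f be drawn uniformly at random from the reciprocal Littlewood polynomials of length n (coefficients in {1,-1} satisfying a_j = a_{n-1-j}). Then E(‖f‖₄⁴) = 3n² - 3n + (1-(-1)ⁿ)/2. -/

import Mathlib

open MeasureTheory

/-- The fourth power of the `L₄` norm of `f(z) = ∑_{j<n} a_j z^j` on the unit circle. -/
noncomputable def L4pow4 (n : ℕ) (a : ℕ → ℝ) : ℝ :=
  (1 / (2 * Real.pi)) * ∫ θ in (0:ℝ)..(2 * Real.pi),
    ‖∑ j ∈ Finset.range n, (a j : ℂ) * Complex.exp ((θ : ℂ) * Complex.I) ^ j‖ ^ 4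

/-- The coefficient sequence of the reciprocal Littlewood polynomial of length `n`
determined by the free coefficients `a_0, …, a_{⌊(n-1)/2⌋}` (given as Booleans
encoding ±1): the remaining coefficients are determined by `a_j = a_{n-1-j}`. -/
def symCoef (n : ℕ) (f : Fin ((n + 1) / 2) → Bool) : ℕ → ℝ := fun j =>
  if h : j < (n + 1) / 2 then (if f ⟨j, h⟩ then 1 else -1)
  else if h2 : j < n then (if f ⟨n - 1 - j, by omega⟩ then 1 else -1)
  else 0

/-!
For a reciprocal `f`, the symmetry `a_j = a_{n-1-j}` makes `e^{-i(n-1)θ/2} f(e^{iθ})` the real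
cosine sum `∑_p ε_p w_p cos((2p+1-n)θ/2)` over the free signs `ε_p`, where `w_p = 2` except for
the middle coefficient of odd length (`w_p = 1`). For independent uniform signs
`E (∑ ε_p y_p)⁴ = 3 (∑ y_p²)² - 2 ∑ y_p⁴`, and integrating over the circle by orthogonality of
`cos (kθ)` leaves an expression in `n` and its parity.
-/

open Finset Real

def boolSign (b : Bool) : ℝ := if b then 1 else -1

lemma sum_fun_fin_succ {α β : Type*} [Fintype α] [AddCommMonoid β] {M : ℕ}
    (F : (Fin (M + 1) → α) → β) :
    ∑ ε, F ε = ∑ a, ∑ ε : Fin M → α, F (Fin.cons a ε) := by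
  rw [← Fintype.sum_prod_type']
  exact (Fintype.sum_equiv (Fin.consEquiv fun _ => α) _ _ fun _ => rfl).symm

lemma sum_sum_boolSign_mul_sq {M : ℕ} (y : Fin M → ℝ) :
    ∑ ε : Fin M → Bool, (∑ i, boolSign (ε i) * y i) ^ 2 = 2 ^ M * ∑ i, y i ^ 2 := by
  induction M with
  | zero => simp
  | succ M ih =>
    have hbool : ∀ X : ℝ, ∑ b, (boolSign b * y 0 + X) ^ 2 = 2 * (X ^ 2 + y 0 ^ 2) := by
      intro X; simp [boolSign]; ring
    rw [sum_fun_fin_succ, sum_comm]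
    simp only [Fin.sum_univ_succ, Fin.cons_zero, Fin.cons_succ, hbool, ← mul_sum, sum_add_distrib,
      ih (fun i => y i.succ), sum_const, card_univ, Fintype.card_fun, Fintype.card_bool,
      Fintype.card_fin, nsmul_eq_mul]
    push_cast; ring

lemma sum_sum_boolSign_mul_pow_four {M : ℕ} (y : Fin M → ℝ) :
    ∑ ε : Fin M → Bool, (∑ i, boolSign (ε i) * y i) ^ 4
      = 2 ^ M * (3 * (∑ i, y i ^ 2) ^ 2 - 2 * ∑ i, y i ^ 4) := by
  induction M with
  | zero => simp
  | succ M ih =>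
    have hbool : ∀ X : ℝ, ∑ b, (boolSign b * y 0 + X) ^ 4
        = 2 * (X ^ 4 + 6 * y 0 ^ 2 * X ^ 2 + y 0 ^ 4) := by
      intro X; simp [boolSign]; ring
    rw [sum_fun_fin_succ, sum_comm]
    simp only [Fin.sum_univ_succ, Fin.cons_zero, Fin.cons_succ, hbool, ← mul_sum, sum_add_distrib,
      ih (fun i => y i.succ), sum_sum_boolSign_mul_sq (fun i => y i.succ), sum_const, card_univ,
      Fintype.card_fun, Fintype.card_bool, Fintype.card_fin, nsmul_eq_mul]
    push_cast; ring

lemma integral_cos_int_mul (d : ℤ) :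
    ∫ θ in (0:ℝ)..2 * π, cos (d * θ) = if d = 0 then 2 * π else 0 := by
  rcases eq_or_ne d 0 with rfl | hd
  · simp
  · rw [if_neg hd, intervalIntegral.integral_comp_mul_left _ (Int.cast_ne_zero.mpr hd),
      integral_cos, mul_zero, sin_zero, sub_zero,
      show (d : ℝ) * (2 * π) = (2 * d : ℤ) * π by push_cast; ring, sin_int_mul_pi, smul_zero]

lemma integral_cos_sq_mul_cos_sq (A B : ℤ) :
    ∫ θ in (0:ℝ)..2 * π, cos (A * θ / 2) ^ 2 * cos (B * θ / 2) ^ 2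
      = π / 2 * (1 + (if A = 0 then 1 else 0) + (if B = 0 then 1 else 0)
          + ((if A + B = 0 then 1 else 0) + (if A - B = 0 then 1 else 0)) / 2) := by
  have linearize : ∀ θ : ℝ, cos (A * θ / 2) ^ 2 * cos (B * θ / 2) ^ 2
      = (2 * cos ((0 : ℤ) * θ) + 2 * cos (A * θ) + 2 * cos (B * θ)
          + cos ((A + B : ℤ) * θ) + cos ((A - B : ℤ) * θ)) / 8 := by
    intro θ
    have h := two_mul_cos_mul_cos (A * θ) (B * θ)
    rw [cos_sq, cos_sq, show 2 * (A * θ / 2) = A * θ by ring,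
      show 2 * (B * θ / 2) = B * θ by ring]
    push_cast
    rw [zero_mul, cos_zero, add_mul (A : ℝ), sub_mul (A : ℝ)]
    linarith
  simp only [linearize]
  rw [intervalIntegral.integral_div, intervalIntegral.integral_add, intervalIntegral.integral_add,
    intervalIntegral.integral_add, intervalIntegral.integral_add,
    intervalIntegral.integral_const_mul, intervalIntegral.integral_const_mul,
    intervalIntegral.integral_const_mul]
  all_goals try exact Continuous.intervalIntegrable (by fun_prop) _ _
  simp only [integral_cos_int_mul, if_true]
  split_ifs <;> ring

lemma norm_sum_mul_exp_pow_eq_abs_sum_mul_cos {n : ℕ} {a : ℕ → ℝ}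
    (ha : ∀ j < n, a (n - 1 - j) = a j) (θ : ℝ) :
    ‖∑ j ∈ range n, (a j : ℂ) * Complex.exp (θ * Complex.I) ^ j‖
      = |∑ j ∈ range n, a j * cos ((2 * j + 1 - n) * θ / 2)| := by
  have hsin : ∑ j ∈ range n, a j * sin ((2 * j + 1 - n) * θ / 2) = 0 := by
    have hreflect := sum_range_reflect (fun j => a j * sin ((2 * j + 1 - n) * θ / 2)) n
    have hodd : ∀ j ∈ range n,
        a (n - 1 - j) * sin ((2 * ((n - 1 - j : ℕ) : ℝ) + 1 - n) * θ / 2)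
          = -(a j * sin ((2 * j + 1 - n) * θ / 2)) := by
      intro j hj
      rw [mem_range] at hj
      rw [ha j hj, ← mul_neg, ← sin_neg, Nat.cast_sub (by omega), Nat.cast_sub (by omega)]
      push_cast; ring_nf
    rw [sum_congr rfl hodd, sum_neg_distrib] at hreflect
    linarith
  have hcentre : ∑ j ∈ range n, (a j : ℂ) * Complex.exp (θ * Complex.I) ^ j
      = Complex.exp (((n - 1) * θ / 2 : ℝ) * Complex.I)
        * ((∑ j ∈ range n, a j * cos ((2 * j + 1 - n) * θ / 2) : ℝ) : ℂ) := by
    have hshift : ∑ j ∈ range n, (a j : ℂ) * Complex.exp (θ * Complex.I) ^ j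
        = Complex.exp (((n - 1) * θ / 2 : ℝ) * Complex.I)
          * ∑ j ∈ range n, (a j : ℂ) * Complex.exp (((2 * j + 1 - n) * θ / 2 : ℝ) * Complex.I) := by
      rw [mul_sum]
      refine sum_congr rfl fun j _ => ?_
      rw [← Complex.exp_nat_mul, mul_left_comm (Complex.exp _), ← Complex.exp_add]
      congr 2; push_cast; ring
    rw [hshift]
    congr 1
    apply Complex.ext
    · simp only [Complex.re_sum, Complex.re_ofReal_mul, Complex.exp_ofReal_mul_I_re,
        Complex.ofReal_re]
    · simp only [Complex.im_sum, Complex.im_ofReal_mul, Complex.exp_ofReal_mul_I_im,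
        Complex.ofReal_im, hsin]
  rw [hcentre, norm_mul, Complex.norm_exp_ofReal_mul_I, one_mul, Complex.norm_real, norm_eq_abs]

section

variable {n : ℕ}

/-- The index of the free coefficient that `a_j` equals. -/
def foldIdx (j : Fin n) : Fin ((n + 1) / 2) := ⟨min j (n - 1 - j), by omega⟩

/-- The number of `j` with `foldIdx j = p`. -/
def foldWeight (n p : ℕ) : ℝ := if 2 * p + 1 = n then 1 else 2

def midIndicator (n p : ℕ) : ℝ := if 2 * p + 1 = n then 1 else 0

noncomputable def foldedCos (n p : ℕ) (θ : ℝ) : ℝ :=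
  foldWeight n p * cos ((2 * p + 1 - n) * θ / 2)

lemma symCoef_eq_boolSign_foldIdx (f : Fin ((n + 1) / 2) → Bool) (j : Fin n) :
    symCoef n f j = boolSign (f (foldIdx j)) := by
  have hj := j.isLt
  unfold symCoef boolSign
  by_cases h : (j : ℕ) < (n + 1) / 2
  · rw [dif_pos h, show foldIdx j = ⟨j, h⟩ from Fin.ext (by simp [foldIdx]; omega)]
  · rw [dif_neg h, dif_pos hj, show foldIdx j = ⟨n - 1 - j, by omega⟩ from
      Fin.ext (by simp [foldIdx]; omega)]

lemma symCoef_reflect (f : Fin ((n + 1) / 2) → Bool) {j : ℕ} (hj : j < n) :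
    symCoef n f (n - 1 - j) = symCoef n f j := by
  have hfold : foldIdx (⟨n - 1 - j, by omega⟩ : Fin n) = foldIdx ⟨j, hj⟩ :=
    Fin.ext (by simp only [foldIdx]; omega)
  have h₁ := symCoef_eq_boolSign_foldIdx f ⟨n - 1 - j, by omega⟩
  have h₂ := symCoef_eq_boolSign_foldIdx f ⟨j, hj⟩
  rw [hfold] at h₁
  exact h₁.trans h₂.symm

lemma card_filter_foldIdx_eq (p : Fin ((n + 1) / 2)) :
    #{j : Fin n | foldIdx j = p} = if 2 * (p : ℕ) + 1 = n then 1 else 2 := by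
  have hp := p.isLt
  split_ifs with h
  · refine card_eq_one.mpr ⟨⟨p, by omega⟩, ?_⟩
    ext j; simp [foldIdx, Fin.ext_iff]; omega
  · refine card_eq_two.mpr ⟨⟨p, by omega⟩, ⟨n - 1 - p, by omega⟩, by simp [Fin.ext_iff]; omega, ?_⟩
    ext j; simp [foldIdx, Fin.ext_iff]; omega

lemma cos_foldIdx (j : Fin n) (θ : ℝ) :
    cos ((2 * (foldIdx j : ℕ) + 1 - n) * θ / 2) = cos ((2 * (j : ℕ) + 1 - n) * θ / 2) := by
  rcases min_cases (j : ℕ) (n - 1 - j) with ⟨h, -⟩ | ⟨h, -⟩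
  · simp only [foldIdx, h]
  · simp only [foldIdx, h]
    rw [← cos_neg, Nat.cast_sub (by omega), Nat.cast_sub (by omega)]
    push_cast; ring_nf

lemma sum_symCoef_mul_cos (f : Fin ((n + 1) / 2) → Bool) (θ : ℝ) :
    ∑ j ∈ range n, symCoef n f j * cos ((2 * j + 1 - n) * θ / 2)
      = ∑ p, boolSign (f p) * foldedCos n p θ := by
  rw [← Fin.sum_univ_eq_sum_range (fun j => symCoef n f j * cos ((2 * j + 1 - n) * θ / 2)),
    ← sum_fiberwise univ foldIdx]
  refine sum_congr rfl fun p _ => ?_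
  have hfibre : ∀ j ∈ ({j : Fin n | foldIdx j = p} : Finset _),
      symCoef n f j * cos ((2 * (j : ℕ) + 1 - n) * θ / 2)
        = boolSign (f p) * cos ((2 * (p : ℕ) + 1 - n) * θ / 2) := by
    intro j hj
    rw [(mem_filter.mp hj).2.symm, symCoef_eq_boolSign_foldIdx, cos_foldIdx]
  rw [sum_congr rfl hfibre, sum_const, card_filter_foldIdx_eq, foldedCos, foldWeight,
    nsmul_eq_mul]
  split_ifs <;> push_cast <;> ring

lemma sum_midIndicator : ∑ p : Fin ((n + 1) / 2), midIndicator n p = ((n % 2 : ℕ) : ℝ) := by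
  rw [Fin.sum_univ_eq_sum_range (fun p => midIndicator n p)]
  rcases Nat.even_or_odd' n with ⟨k, rfl | rfl⟩
  · rw [show (2 * k + 1) / 2 = k by omega, Nat.mul_mod_right]
    simp only [midIndicator]
    rw [sum_eq_zero fun p _ => if_neg (by omega)]
    simp
  · rw [show (2 * k + 1 + 1) / 2 = k + 1 by omega, show (2 * k + 1) % 2 = 1 by omega]
    simp only [midIndicator, show ∀ p, (2 * p + 1 = 2 * k + 1) ↔ p = k from fun p => by omega]
    simp

lemma cast_succ_div_two : (((n + 1) / 2 : ℕ) : ℝ) = (n + (n % 2 : ℕ)) / 2 := by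
  rw [eq_div_iff two_ne_zero]
  exact_mod_cast (by omega : (n + 1) / 2 * 2 = n + n % 2)

lemma cast_mod_two_sq : ((n % 2 : ℕ) : ℝ) ^ 2 = (n % 2 : ℕ) := by
  rcases Nat.mod_two_eq_zero_or_one n with h | h <;> simp [h]

lemma sum_sub_mul_midIndicator (a b : ℝ) :
    ∑ p : Fin ((n + 1) / 2), (a - b * midIndicator n p)
      = a * ((n + 1) / 2 : ℕ) - b * (n % 2 : ℕ) := by
  rw [sum_sub_distrib, ← mul_sum, sum_midIndicator, sum_const, card_univ, Fintype.card_fin,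
    nsmul_eq_mul, mul_comm]

@[fun_prop]
lemma continuous_foldedCos (p : ℕ) : Continuous (foldedCos n p) := by
  unfold foldedCos; fun_prop

lemma integral_foldedCos_sq_mul_sq (p q : Fin ((n + 1) / 2)) :
    ∫ θ in (0:ℝ)..2 * π, foldedCos n p θ ^ 2 * foldedCos n q θ ^ 2
      = π / 2 * (foldWeight n p ^ 2 * foldWeight n q ^ 2
          * (1 + midIndicator n p + midIndicator n q
            + (midIndicator n p * midIndicator n q + if p = q then 1 else 0) / 2)) := by
  have hp := p.isLt
  have hq := q.isLt
  have hcast : ∀ r : Fin ((n + 1) / 2),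
      (2 * ((r : ℕ) : ℝ) + 1 - n) = ((2 * (r : ℤ) + 1 - n : ℤ) : ℝ) := fun r => by push_cast; ring
  simp only [foldedCos, mul_pow, hcast]
  simp only [mul_mul_mul_comm _ (cos _ ^ 2), intervalIntegral.integral_const_mul,
    integral_cos_sq_mul_cos_sq]
  simp only [midIndicator, Fin.ext_iff]
  split_ifs <;> first | omega | ring

lemma integral_sq_sum_foldedCos_sq :
    ∫ θ in (0:ℝ)..2 * π, (∑ p : Fin ((n + 1) / 2), foldedCos n p θ ^ 2) ^ 2
      = 2 * π * (n ^ 2 + n - (n % 2 : ℕ)) := by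
  -- separate `p` from `q`, using `midIndicator n p ^ 2 = midIndicator n p`
  have hseparate : ∀ p q : Fin ((n + 1) / 2),
      foldWeight n p ^ 2 * foldWeight n q ^ 2
          * (1 + midIndicator n p + midIndicator n q
            + (midIndicator n p * midIndicator n q + if p = q then 1 else 0) / 2)
        = (4 - 2 * midIndicator n p) * (4 - 2 * midIndicator n q)
          - midIndicator n p * midIndicator n q / 2
          + if p = q then (16 - 15 * midIndicator n p) / 2 else 0 := by
    intro p q
    simp only [foldWeight, midIndicator]
    split_ifs <;> simp_all <;> norm_num
  have hint : ∀ p q : Fin ((n + 1) / 2), IntervalIntegrable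
      (fun θ => foldedCos n p θ ^ 2 * foldedCos n q θ ^ 2) volume 0 (2 * π) :=
    fun p q => Continuous.intervalIntegrable (by fun_prop) _ _
  calc ∫ θ in (0:ℝ)..2 * π, (∑ p : Fin ((n + 1) / 2), foldedCos n p θ ^ 2) ^ 2
      = ∑ p : Fin ((n + 1) / 2), ∑ q : Fin ((n + 1) / 2),
          ∫ θ in (0:ℝ)..2 * π, foldedCos n p θ ^ 2 * foldedCos n q θ ^ 2 := by
        simp only [sq (∑ p : Fin ((n + 1) / 2), _), sum_mul_sum]
        rw [intervalIntegral.integral_finsetSum fun p _ => Continuous.intervalIntegrable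
          (continuous_finsetSum _ fun q _ => by fun_prop) _ _]
        exact sum_congr rfl fun p _ => intervalIntegral.integral_finsetSum fun q _ => hint p q
    _ = π / 2 * ∑ p : Fin ((n + 1) / 2), ∑ q : Fin ((n + 1) / 2),
          ((4 - 2 * midIndicator n p) * (4 - 2 * midIndicator n q)
            - midIndicator n p * midIndicator n q / 2
            + if p = q then (16 - 15 * midIndicator n p) / 2 else 0) := by
        simp only [integral_foldedCos_sq_mul_sq, hseparate, mul_sum]
    _ = π / 2 * ((∑ p : Fin ((n + 1) / 2), (4 - 2 * midIndicator n p)) ^ 2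
          - (∑ p : Fin ((n + 1) / 2), midIndicator n p) ^ 2 / 2
          + (∑ p : Fin ((n + 1) / 2), (16 - 15 * midIndicator n p)) / 2) := by
        rw [sq, sq, sum_mul_sum, sum_mul_sum, sum_div, ← sum_sub_distrib, sum_div,
          ← sum_add_distrib]
        refine congrArg _ (sum_congr rfl fun p _ => ?_)
        rw [sum_div, ← sum_sub_distrib, sum_add_distrib, sum_ite_eq, if_pos (mem_univ _)]
    _ = 2 * π * (n ^ 2 + n - (n % 2 : ℕ)) := by
        rw [sum_sub_mul_midIndicator, sum_sub_mul_midIndicator, sum_midIndicator,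
          cast_succ_div_two]
        linear_combination (-π / 4) * cast_mod_two_sq (n := n)

lemma integral_sum_foldedCos_pow_four :
    ∫ θ in (0:ℝ)..2 * π, ∑ p : Fin ((n + 1) / 2), foldedCos n p θ ^ 4
      = 2 * π * (3 * n - 2 * (n % 2 : ℕ)) := by
  have hterm : ∀ p : Fin ((n + 1) / 2),
      ∫ θ in (0:ℝ)..2 * π, foldedCos n p θ ^ 4 = π / 2 * (24 - 20 * midIndicator n p) := by
    intro p
    simp only [show ∀ θ, foldedCos n p θ ^ 4 = foldedCos n p θ ^ 2 * foldedCos n p θ ^ 2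
      from fun θ => by ring, integral_foldedCos_sq_mul_sq, foldWeight, midIndicator, if_true]
    split_ifs <;> norm_num
  rw [intervalIntegral.integral_finsetSum fun p _ => Continuous.intervalIntegrable
      (by fun_prop) _ _]
  simp only [hterm, ← mul_sum, sum_sub_mul_midIndicator, cast_succ_div_two]
  ring

lemma L4pow4_symCoef (f : Fin ((n + 1) / 2) → Bool) :
    L4pow4 n (symCoef n f)
      = 1 / (2 * π) * ∫ θ in (0:ℝ)..2 * π, (∑ p, boolSign (f p) * foldedCos n p θ) ^ 4 := by
  unfold L4pow4
  congr 1
  refine intervalIntegral.integral_congr fun θ _ => ?_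
  rw [norm_sum_mul_exp_pow_eq_abs_sum_mul_cos fun j hj => symCoef_reflect f hj,
    sum_symCoef_mul_cos, (by decide : Even 4).pow_abs]

lemma average_L4pow4_symCoef :
    (1 / 2 ^ ((n + 1) / 2) : ℝ) * ∑ f : Fin ((n + 1) / 2) → Bool, L4pow4 n (symCoef n f)
      = 1 / (2 * π) * ∫ θ in (0:ℝ)..2 * π,
          (3 * (∑ p : Fin ((n + 1) / 2), foldedCos n p θ ^ 2) ^ 2
            - 2 * ∑ p : Fin ((n + 1) / 2), foldedCos n p θ ^ 4) := by
  rw [sum_congr rfl fun f _ => L4pow4_symCoef f, ← mul_sum,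
    ← intervalIntegral.integral_finsetSum fun f _ => Continuous.intervalIntegrable
      (by fun_prop) _ _, mul_left_comm, ← intervalIntegral.integral_const_mul]
  congr 2
  funext θ
  rw [sum_sum_boolSign_mul_pow_four]
  field_simp

end

theorem stmt_16_general (n : ℕ) :
    (1 / 2 ^ ((n + 1) / 2) : ℝ) *
        ∑ f : Fin ((n + 1) / 2) → Bool, L4pow4 n (symCoef n f) =
      3 * (n : ℝ) ^ 2 - 3 * n + (1 - (-1 : ℝ) ^ n) / 2 := by
  have hparity : (1 - (-1 : ℝ) ^ n) / 2 = (n % 2 : ℕ) := by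
    rcases Nat.even_or_odd n with h | h
    · rw [h.neg_one_pow, Nat.even_iff.mp h]; norm_num
    · rw [h.neg_one_pow, Nat.odd_iff.mp h]; norm_num
  rw [average_L4pow4_symCoef, intervalIntegral.integral_sub, intervalIntegral.integral_const_mul,
    intervalIntegral.integral_const_mul, integral_sq_sum_foldedCos_sq,
    integral_sum_foldedCos_pow_four, hparity]
  · field_simp
    ring
  all_goals exact Continuous.intervalIntegrable (by fun_prop) _ _

/-- For `f` drawn uniformly at random from the reciprocal Littlewood polynomials of
length `n`, `E(‖f‖₄⁴) = 3n² - 3n + (1-(-1)ⁿ)/2`. -/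
theorem stmt_16 (n : ℕ) (hn : 0 < n) :
    (1 / 2 ^ ((n + 1) / 2) : ℝ) *
        ∑ f : Fin ((n + 1) / 2) → Bool, L4pow4 n (symCoef n f) =
      3 * (n : ℝ) ^ 2 - 3 * n + (1 - (-1 : ℝ) ^ n) / 2 :=
  stmt_16_general n
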